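/- Let α ∈ ℂ* with α not a root of unity, and let φ : ℂ² → ℂ² be φ(x,y) = (αx, y+1). If ψ(x,y) = (ψ₁(x,y), ψ₂(x,y)) is a birational map of ℂ² commuting with φ, then ψ₁ depends only on x, ψ₁ is a Möbius transformation η with η(αx) = αη(x), and ψ₂(x,y) = y + c for some constant c ∈ ℂ. -/

import Mathlib

namespace Stmt7Aux
open Polynomial

/-- shift `f(Y) ↦ f(Y+1)` as a ring hom on `ℂ[Y]`. -/
noncomputable def Sh : Polynomial ℂ →+* Polynomial ℂ := eval₂RingHom C (X + C 1)

lemma Sh_apply (f : Polynomial ℂ) : Sh f = f.comp (X + C 1) := rfl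

lemma Sh_eval (f : Polynomial ℂ) (x : ℂ) : (Sh f).eval x = f.eval (x + 1) := by
  simp [Sh_apply, eval_comp]

lemma Sh_injective : Function.Injective Sh := by
  intro f g h
  apply Polynomial.funext
  intro r
  have := congrArg (Polynomial.eval (r - 1)) h
  simpa [Sh_eval] using this

lemma natDegree_X_add_one : ((X + 1 : Polynomial ℂ)).natDegree = 1 := by
  simpa using natDegree_X_add_C (1 : ℂ)

lemma leadingCoeff_X_add_one : ((X + 1 : Polynomial ℂ)).leadingCoeff = 1 := by
  simpa using leadingCoeff_X_add_C (1 : ℂ)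

lemma natDegree_Sh (f : Polynomial ℂ) : (Sh f).natDegree = f.natDegree := by
  simp [Sh_apply, natDegree_comp, natDegree_X_add_one]

lemma Sh_eigen (f : Polynomial ℂ) (d : ℂ) (hf : f ≠ 0) (h : Sh f = C d * f) :
    d = 1 ∧ f = C (f.coeff 0) := by
  by_cases hdeg : f.natDegree = 0
  · obtain ⟨a, rfl⟩ := natDegree_eq_zero.mp hdeg
    have ha : a ≠ 0 := fun h0 => hf (by simp [h0])
    have : C a = C (d * a) := by rw [C_mul]; simpa [Sh_apply] using h
    have had : a = d * a := C_injective this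
    refine ⟨?_, by simp⟩
    field_simp at had
    tauto
  · exfalso
    have hlc : (Sh f).leadingCoeff = f.leadingCoeff := by
      rw [Sh_apply, leadingCoeff_comp (by simp [natDegree_X_add_one])]
      simp [leadingCoeff_X_add_one]
    rw [h, leadingCoeff_mul, leadingCoeff_C] at hlc
    have hd1 : d = 1 := by
      have := mul_right_cancel₀ (leadingCoeff_ne_zero.mpr hf) (hlc.trans (one_mul _).symm)
      exact this
    rw [hd1] at h
    simp only [map_one, one_mul] at h
    have hev : ∀ x : ℂ, f.eval (x + 1) = f.eval x := by
      intro x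
      rw [← Sh_eval, h]
    have hnat : ∀ n : ℕ, f.eval (n : ℂ) = f.eval 0 := by
      intro n
      induction n with
      | zero => simp
      | succ k ih => push_cast; rw [hev (k : ℂ), ih]
    have hzero : f - C (f.eval 0) = 0 := by
      apply Polynomial.eq_zero_of_infinite_isRoot
      apply Set.infinite_of_injective_forall_mem (f := fun n : ℕ => (n : ℂ))
        (Nat.cast_injective)
      intro n
      simp [IsRoot, hnat n]
    have : f = C (f.eval 0) := by linear_combination hzero
    rw [this] at hdeg
    simp at hdeg

/-- The substitution `x ↦ αx`, `y ↦ y+1` on `ℂ[y][x]` (outer variable = x). -/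
noncomputable def Uu (α : ℂ) : Polynomial (Polynomial ℂ) →+* Polynomial (Polynomial ℂ) :=
  Polynomial.eval₂RingHom (Polynomial.C.comp Sh) (Polynomial.C (Polynomial.C α) * Polynomial.X)

lemma Uu_C (α : ℂ) (f : Polynomial ℂ) : Uu α (C f) = C (Sh f) := by
  simp [Uu]

lemma Uu_X (α : ℂ) : Uu α X = C (C α) * X := by
  simp [Uu]

lemma Sh_X : Sh X = X + C 1 := by
  simp [Sh_apply]

lemma coeff_Uu (α : ℂ) (b : Polynomial (Polynomial ℂ)) (i : ℕ) :
    (Uu α b).coeff i = C (α ^ i) * Sh (b.coeff i) := by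
  induction b using Polynomial.induction_on' with
  | add p q hp hq => simp [map_add, coeff_add, hp, hq, mul_add]
  | monomial n a =>
    have : Uu α (monomial n a) = C (Sh a) * ((C (C α)) ^ n * X ^ n) := by
      simp [Uu, eval₂_monomial, mul_pow, mul_assoc]
    rcases eq_or_ne i n with rfl | hin
    · rw [this, ← mul_assoc, ← C_pow, ← C_mul, coeff_C_mul, coeff_X_pow, coeff_monomial,
        if_pos rfl, if_pos rfl, mul_one, ← C_pow]
      ring
    · rw [this, ← mul_assoc, ← C_pow, ← C_mul, coeff_C_mul, coeff_X_pow, coeff_monomial,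
        if_neg hin, if_neg (Ne.symm hin), mul_zero, map_zero, mul_zero]

lemma Uu_injective (α : ℂ) (hα : α ≠ 0) : Function.Injective (Uu α) := by
  intro b b' h
  ext i : 1
  apply Sh_injective
  have h2 := congrArg (fun p => Polynomial.coeff p i) h
  simp only [coeff_Uu] at h2
  exact mul_left_cancel₀ (C_ne_zero.mpr (pow_ne_zero i hα)) h2

lemma Uu_ne_zero (α : ℂ) (hα : α ≠ 0) {b : Polynomial (Polynomial ℂ)} (hb : b ≠ 0) :
    Uu α b ≠ 0 := fun h0 => hb (Uu_injective α hα (by simpa using h0))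

lemma natDegree_Uu (α : ℂ) (hα : α ≠ 0) (b : Polynomial (Polynomial ℂ)) :
    (Uu α b).natDegree = b.natDegree := by
  rcases eq_or_ne b 0 with rfl | hb
  · simp
  apply le_antisymm
  · rw [natDegree_le_iff_coeff_eq_zero]
    intro N hN
    rw [coeff_Uu, coeff_eq_zero_of_natDegree_lt hN, map_zero, mul_zero]
  · apply le_natDegree_of_ne_zero
    rw [coeff_Uu]
    exact mul_ne_zero (C_ne_zero.mpr (pow_ne_zero _ hα))
      (fun h0 => (leadingCoeff_ne_zero.mpr hb) (Sh_injective (by simpa using h0)))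


set_option synthInstance.maxHeartbeats 1000000 in
noncomputable instance : UniqueFactorizationMonoid (Polynomial (Polynomial ℂ)) :=
  inferInstance

set_option synthInstance.maxHeartbeats 1000000 in
instance : DecompositionMonoid (Polynomial (Polynomial ℂ)) :=
  inferInstance

lemma pow_inj_of_not_root (α : ℂ) (hα : α ≠ 0) (hroot : ∀ n : ℕ, 0 < n → α ^ n ≠ 1)
    {i j : ℕ} (h : α ^ i = α ^ j) : i = j := by
  rcases lt_trichotomy i j with hij | hij | hij
  · exfalso
    apply hroot (j - i) (by omega)
    have : α ^ i * α ^ (j - i) = α ^ i * 1 := by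
      rw [mul_one, ← pow_add]
      rw [h]; congr 1; omega
    exact mul_left_cancel₀ (pow_ne_zero i hα) this
  · exact hij
  · exfalso
    apply hroot (i - j) (by omega)
    have : α ^ j * α ^ (i - j) = α ^ j * 1 := by
      rw [mul_one, ← pow_add]
      rw [← h]; congr 1; omega
    exact mul_left_cancel₀ (pow_ne_zero j hα) this

lemma Uu_eigen_coeff (α : ℂ) (hα : α ≠ 0) {b : Polynomial (Polynomial ℂ)} {c : ℂ}
    (h : Uu α b = C (C c) * b) {i : ℕ} (hi : b.coeff i ≠ 0) :
    c = α ^ i ∧ b.coeff i = C ((b.coeff i).coeff 0) := by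
  have h2 := congrArg (fun p => Polynomial.coeff p i) h
  simp only [coeff_Uu, coeff_C_mul] at h2
  -- C (α ^ i) * Sh (b.coeff i) = C c * b.coeff i
  have hSh : Sh (b.coeff i) = C (c / α ^ i) * b.coeff i := by
    apply mul_left_cancel₀ (C_ne_zero.mpr (pow_ne_zero i hα))
    rw [h2, ← mul_assoc, ← C_mul]
    rw [mul_div_cancel₀ _ (pow_ne_zero i hα)]
  obtain ⟨hd, hc⟩ := Sh_eigen _ _ hi hSh
  refine ⟨?_, hc⟩
  field_simp at hd
  exact hd

lemma Uu_eigen (α : ℂ) (hα : α ≠ 0) (hroot : ∀ n : ℕ, 0 < n → α ^ n ≠ 1)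
    (b : Polynomial (Polynomial ℂ)) (c : ℂ) (hb : b ≠ 0)
    (h : Uu α b = C (C c) * b) :
    ∃ (m : ℕ) (a : ℂ), a ≠ 0 ∧ b = C (C a) * X ^ m ∧ c = α ^ m := by
  set m := b.natDegree with hm
  have hbm : b.coeff m ≠ 0 := by
    rw [hm]; exact leadingCoeff_ne_zero.mpr hb
  obtain ⟨hcm, hform⟩ := Uu_eigen_coeff α hα h hbm
  refine ⟨m, (b.coeff m).coeff 0, ?_, ?_, hcm⟩
  · intro h0; rw [h0, map_zero] at hform; exact hbm hform
  · ext i : 1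
    rw [coeff_C_mul, coeff_X_pow]
    rcases eq_or_ne i m with rfl | him
    · rw [if_pos rfl, mul_one]; exact hform
    · rw [if_neg him, mul_zero]
      by_contra hne
      obtain ⟨hci, -⟩ := Uu_eigen_coeff α hα h hne
      exact him (pow_inj_of_not_root α hα hroot (hci.symm.trans hcm))

lemma invariant_const (α : ℂ) (hα : α ≠ 0) (hroot : ∀ n : ℕ, 0 < n → α ^ n ≠ 1)
    (b q : Polynomial (Polynomial ℂ)) (hq : q ≠ 0)
    (h : Uu α b * q = b * Uu α q) :
    ∃ c : ℂ, b = C (C c) * q := by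
  rcases eq_or_ne b 0 with rfl | hb
  · exact ⟨0, by simp⟩
  obtain ⟨b₁, q₁, d, hrel, hbd, hqd⟩ :=
    UniqueFactorizationMonoid.exists_reduced_factors b hb q
  have hd : d ≠ 0 := fun h0 => hb (by rw [← hbd, h0, zero_mul])
  have hb1 : b₁ ≠ 0 := fun h0 => hb (by rw [← hbd, h0, mul_zero])
  have hq1 : q₁ ≠ 0 := fun h0 => hq (by rw [← hqd, h0, mul_zero])
  have hUd : Uu α d ≠ 0 := Uu_ne_zero α hα hd
  have h1 : Uu α b₁ * q₁ = b₁ * Uu α q₁ := by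
    apply mul_left_cancel₀ (mul_ne_zero hUd hd)
    have h' := h
    rw [← hbd, ← hqd, map_mul, map_mul] at h'
    linear_combination h'
  have hdvd : b₁ ∣ Uu α b₁ := by
    apply hrel.dvd_of_dvd_mul_right (z := q₁)
    rw [h1]
    exact dvd_mul_right _ _
  have key : ∀ e : Polynomial (Polynomial ℂ), e ≠ 0 → e ∣ Uu α e →
      ∃ γ : ℂ, Uu α e = C (C γ) * e := by
    intro e he hdv
    obtain ⟨k, hk⟩ := hdv
    have hkne : k ≠ 0 := by
      intro h0; rw [h0, mul_zero] at hk; exact Uu_ne_zero α hα he hk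
    have hdeg : e.natDegree + k.natDegree = e.natDegree := by
      rw [← natDegree_mul he hkne, ← hk, natDegree_Uu α hα]
    have hk0 : k.natDegree = 0 := by omega
    have hg : k = C (k.coeff 0) := eq_C_of_natDegree_eq_zero hk0
    set g := k.coeff 0 with hgdef
    have hm : e.coeff e.natDegree ≠ 0 := leadingCoeff_ne_zero.mpr he
    have hco := congrArg (fun p => Polynomial.coeff p e.natDegree) hk
    simp only [coeff_Uu] at hco
    rw [hg, coeff_mul_C] at hco
    have hShne : Sh (e.coeff e.natDegree) ≠ 0 :=
      fun h0 => hm (Sh_injective (by simpa using h0))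
    have hgne : g ≠ 0 := by
      intro h0
      rw [h0, mul_zero] at hco
      exact mul_ne_zero (C_ne_zero.mpr (pow_ne_zero _ hα)) hShne hco
    have hdg : (e.coeff e.natDegree).natDegree + g.natDegree
        = (e.coeff e.natDegree).natDegree := by
      rw [← natDegree_mul hm hgne, ← hco,
        natDegree_mul (C_ne_zero.mpr (pow_ne_zero _ hα)) hShne,
        natDegree_C, natDegree_Sh, zero_add]
    have hgg : g.natDegree = 0 := by omega
    have hgC : g = C (g.coeff 0) := eq_C_of_natDegree_eq_zero hgg
    refine ⟨g.coeff 0, ?_⟩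
    rw [hk, hg]
    conv_lhs => rw [hgC]
    ring
  obtain ⟨γ₁, hγ₁⟩ := key b₁ hb1 hdvd
  have hdvq : q₁ ∣ Uu α q₁ := by
    apply (hrel.symm).dvd_of_dvd_mul_right (z := b₁)
    have he : Uu α q₁ * b₁ = Uu α b₁ * q₁ := by rw [h1]; ring
    rw [he]
    exact dvd_mul_left _ _
  obtain ⟨γ₂, hγ₂⟩ := key q₁ hq1 hdvq
  have hgam : γ₁ = γ₂ := by
    have h2 := h1
    rw [hγ₁, hγ₂] at h2
    have h3 : (C (C γ₁) - C (C γ₂)) * (b₁ * q₁) = 0 := by linear_combination h2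
    rcases mul_eq_zero.mp h3 with h4 | h4
    · have h5 : (C (C γ₁) : Polynomial (Polynomial ℂ)) = C (C γ₂) := by
        linear_combination h4
      exact C_injective (C_injective h5)
    · exact absurd h4 (mul_ne_zero hb1 hq1)
  obtain ⟨m₁, a₁, ha₁, hb₁form, hc₁⟩ := Uu_eigen α hα hroot b₁ γ₁ hb1 hγ₁
  obtain ⟨m₂, a₂, ha₂, hq₁form, hc₂⟩ := Uu_eigen α hα hroot q₁ γ₂ hq1 hγ₂
  have hmm : m₁ = m₂ := pow_inj_of_not_root α hα hroot (by rw [← hc₁, hgam, hc₂])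
  have hm0 : m₁ = 0 := by
    by_contra hm0
    have hXd1 : (X : Polynomial (Polynomial ℂ)) ∣ b₁ := by
      rw [hb₁form]
      exact Dvd.dvd.mul_left (dvd_pow_self X hm0) _
    have hXd2 : (X : Polynomial (Polynomial ℂ)) ∣ q₁ := by
      rw [hq₁form, ← hmm]
      exact Dvd.dvd.mul_left (dvd_pow_self X hm0) _
    exact Polynomial.not_isUnit_X (hrel hXd1 hXd2)
  refine ⟨a₁ / a₂, ?_⟩
  rw [← hbd, ← hqd, hb₁form, hq₁form, ← hmm, hm0]
  simp only [pow_zero, mul_one]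
  have hCC : (C (C (a₁ / a₂)) : Polynomial (Polynomial ℂ)) * C (C a₂) = C (C a₁) := by
    rw [← map_mul, ← map_mul]
    congr 2
    field_simp
  linear_combination (-d) * hCC

lemma Sh_C (c : ℂ) : Sh (C c) = C c := by simp [Sh_apply]

/-- The substitution `x ↦ αx, y ↦ y+1` on `ℂ[x,y]`. -/
noncomputable def Tm (α : ℂ) : MvPolynomial (Fin 2) ℂ →ₐ[ℂ] MvPolynomial (Fin 2) ℂ :=
  MvPolynomial.aeval ![MvPolynomial.C α * MvPolynomial.X 0, MvPolynomial.X 1 + 1]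

/-- `ℂ[x,y] → ℂ[y][x]`, `x` outer. -/
noncomputable def Phi : MvPolynomial (Fin 2) ℂ →ₐ[ℂ] Polynomial (Polynomial ℂ) :=
  MvPolynomial.aeval ![Polynomial.X, Polynomial.C Polynomial.X]

lemma eval_Tm (α x y : ℂ) (p : MvPolynomial (Fin 2) ℂ) :
    MvPolynomial.eval ![x, y] (Tm α p) = MvPolynomial.eval ![α * x, y + 1] p := by
  induction p using MvPolynomial.induction_on with
  | C a => simp [Tm]
  | add p q hp hq => simp only [map_add, hp, hq]
  | mul_X p i hp =>
    rw [map_mul, map_mul, hp, map_mul]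
    congr 1
    fin_cases i <;> simp [Tm]

lemma eval_Phi (x y : ℂ) (p : MvPolynomial (Fin 2) ℂ) :
    Polynomial.eval y (Polynomial.eval (Polynomial.C x) (Phi p)) =
      MvPolynomial.eval ![x, y] p := by
  induction p using MvPolynomial.induction_on with
  | C a => simp [Phi]
  | add p q hp hq => simp only [map_add, eval_add, hp, hq]
  | mul_X p i hp =>
    rw [map_mul, eval_mul, eval_mul, map_mul, hp]
    congr 1
    fin_cases i <;> simp [Phi]

lemma Phi_Tm (α : ℂ) (p : MvPolynomial (Fin 2) ℂ) :
    Phi (Tm α p) = Uu α (Phi p) := by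
  induction p using MvPolynomial.induction_on with
  | C a =>
    have h1 : Tm α (MvPolynomial.C a) = MvPolynomial.C a := by simp [Tm]
    have h2 : Phi (MvPolynomial.C a) = C (C a) := by simp [Phi, MvPolynomial.algebraMap_eq]
    rw [h1, h2, Uu_C, Sh_C]
  | add p q hp hq => simp only [map_add, hp, hq]
  | mul_X p i hp =>
    simp only [map_mul, hp]
    refine congrArg (Uu α (Phi p) * ·) ?_
    fin_cases i
    · show Phi (Tm α (MvPolynomial.X 0)) = Uu α (Phi (MvPolynomial.X 0))
      have h1 : Tm α (MvPolynomial.X 0) = MvPolynomial.C α * MvPolynomial.X 0 := by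
        simp [Tm]
      have h2 : Phi (MvPolynomial.X 0) = X := by simp [Phi]
      rw [h1, h2, Uu_X, map_mul, h2]
      congr 1
      simp [Phi, MvPolynomial.algebraMap_eq]
    · show Phi (Tm α (MvPolynomial.X 1)) = Uu α (Phi (MvPolynomial.X 1))
      have h2 : Phi (MvPolynomial.X 1) = C X := by simp [Phi]
      have h1 : Tm α (MvPolynomial.X 1) = MvPolynomial.X 1 + 1 := by simp [Tm]
      rw [h1, h2, Uu_C, Sh_X, map_add, h2, map_one]
      simp

lemma veta (v : Fin 2 → ℂ) : v = ![v 0, v 1] := by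
  funext i; fin_cases i <;> simp

lemma mv_funext {p q : MvPolynomial (Fin 2) ℂ}
    (h : ∀ x y : ℂ, MvPolynomial.eval ![x, y] p = MvPolynomial.eval ![x, y] q) : p = q := by
  apply MvPolynomial.funext
  intro v
  rw [veta v]
  exact h _ _

lemma Phi_injective : Function.Injective Phi := by
  intro p q h
  apply mv_funext
  intro x y
  rw [← eval_Phi, ← eval_Phi, h]

lemma poly_of_pointwise (K W : MvPolynomial (Fin 2) ℂ) (hW : W ≠ 0)
    (h : ∀ x y : ℂ, MvPolynomial.eval ![x, y] W ≠ 0 → MvPolynomial.eval ![x, y] K = 0) :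
    K = 0 := by
  have hKW : K * W = 0 := by
    apply mv_funext
    intro x y
    rw [map_mul, map_zero]
    rcases eq_or_ne (MvPolynomial.eval ![x, y] W) 0 with h0 | h0
    · rw [h0, mul_zero]
    · rw [h x y h0, zero_mul]
  rcases mul_eq_zero.mp hKW with h0 | h0
  · exact h0
  · exact absurd h0 hW

lemma eval_Phi_map (x y : ℂ) (p : MvPolynomial (Fin 2) ℂ) :
    Polynomial.eval x ((Phi p).map (Polynomial.evalRingHom y)) =
      MvPolynomial.eval ![x, y] p := by
  induction p using MvPolynomial.induction_on with
  | C a => simp [Phi, MvPolynomial.algebraMap_eq]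
  | add p q hp hq => simp only [map_add, Polynomial.map_add, eval_add, hp, hq]
  | mul_X p i hp =>
    rw [map_mul, map_mul, Polynomial.map_mul, eval_mul, hp]
    congr 1
    fin_cases i <;> simp [Phi]

lemma exists_nonroot (G : MvPolynomial (Fin 2) ℂ) (hG : G ≠ 0) :
    ∃ x y : ℂ, MvPolynomial.eval ![x, y] G ≠ 0 := by
  by_contra hcon
  push_neg at hcon
  exact hG (mv_funext fun x y => by simpa using hcon x y)

lemma exists_two_points (G : MvPolynomial (Fin 2) ℂ) (hG : G ≠ 0) :
    ∃ (x₁ x₂ y : ℂ), x₁ ≠ x₂ ∧ MvPolynomial.eval ![x₁, y] G ≠ 0 ∧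
      MvPolynomial.eval ![x₂, y] G ≠ 0 := by
  obtain ⟨x₀, y₀, hxy⟩ := exists_nonroot G hG
  set g := (Phi G).map (Polynomial.evalRingHom y₀) with hg
  have hgne : g ≠ 0 := by
    intro h0
    apply hxy
    rw [← eval_Phi_map x₀ y₀ G, ← hg, h0, Polynomial.eval_zero]
  obtain ⟨x₁, hx₁, x₂, hx₂, hne⟩ := (Polynomial.finite_setOf_isRoot hgne).infinite_compl.nontrivial
  simp only [Set.mem_compl_iff, Set.mem_setOf_eq, Polynomial.IsRoot] at hx₁ hx₂
  refine ⟨x₁, x₂, y₀, hne, ?_, ?_⟩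
  · rw [← eval_Phi_map x₁ y₀ G, ← hg]; exact hx₁
  · rw [← eval_Phi_map x₂ y₀ G, ← hg]; exact hx₂

end Stmt7Aux

open Polynomial in
lemma Stmt7Aux.Tm_ne_zero (α : ℂ) (hα : α ≠ 0) {p : MvPolynomial (Fin 2) ℂ} (hp : p ≠ 0) :
    Stmt7Aux.Tm α p ≠ 0 := by
  intro h0
  apply hp
  apply Stmt7Aux.Phi_injective
  apply Stmt7Aux.Uu_injective α hα
  rw [← Stmt7Aux.Phi_Tm, h0]
  simp

open Polynomial in
lemma Stmt7Aux.Phi_C (a : ℂ) :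
    Stmt7Aux.Phi (MvPolynomial.C a) = C (C a) := by
  simp [Stmt7Aux.Phi, MvPolynomial.algebraMap_eq]

open Polynomial in
lemma Stmt7Aux.Phi_X0 : Stmt7Aux.Phi (MvPolynomial.X 0) = X := by
  simp [Stmt7Aux.Phi]

open Polynomial in
lemma Stmt7Aux.Phi_X1 : Stmt7Aux.Phi (MvPolynomial.X 1) = C X := by
  simp [Stmt7Aux.Phi]

open MvPolynomial

/-- A function `ℂ² → ℂ` given by a rational expression. -/
def IsRatMap (f : ℂ → ℂ → ℂ) : Prop :=
  ∃ p q : MvPolynomial (Fin 2) ℂ, q ≠ 0 ∧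
    ∀ x y : ℂ, f x y = MvPolynomial.eval ![x, y] p / MvPolynomial.eval ![x, y] q

/-- A pair of rational functions defining a birational map of `ℂ²`:
it admits a rational inverse on a dense (Zariski-)open subset. -/
def IsBirationalMap (f g : ℂ → ℂ → ℂ) : Prop :=
  IsRatMap f ∧ IsRatMap g ∧
    ∃ f' g' : ℂ → ℂ → ℂ, IsRatMap f' ∧ IsRatMap g' ∧
      ∃ h : MvPolynomial (Fin 2) ℂ, h ≠ 0 ∧
        ∀ x y : ℂ, MvPolynomial.eval ![x, y] h ≠ 0 →
          f' (f x y) (g x y) = x ∧ g' (f x y) (g x y) = y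


/-- if `α ∈ ℂ*` is not a root of unity and the birational map
`ψ = (ψ₁, ψ₂)` of `ℂ²` commutes with `φ(x,y) = (αx, y+1)`, then `ψ₁` depends
only on `x`, is a Möbius transformation `η` satisfying `η(αx) = αη(x)`, and
`ψ₂(x,y) = y + c` for some constant `c ∈ ℂ`. -/
theorem stmt7 (α : ℂ) (hα : α ≠ 0) (hroot : ∀ n : ℕ, 0 < n → α ^ n ≠ 1)
    (ψ₁ ψ₂ : ℂ → ℂ → ℂ) (hbir : IsBirationalMap ψ₁ ψ₂)
    (hcomm : ∃ h₀ : MvPolynomial (Fin 2) ℂ, h₀ ≠ 0 ∧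
      ∀ x y : ℂ, MvPolynomial.eval ![x, y] h₀ ≠ 0 →
        ψ₁ (α * x) (y + 1) = α * ψ₁ x y ∧ ψ₂ (α * x) (y + 1) = ψ₂ x y + 1) :
    ∃ (a b c d cc : ℂ) (h : MvPolynomial (Fin 2) ℂ),
      a * d - b * c ≠ 0 ∧ h ≠ 0 ∧
      (∀ x y : ℂ, MvPolynomial.eval ![x, y] h ≠ 0 →
          ψ₁ x y = (a * x + b) / (c * x + d) ∧ ψ₂ x y = y + cc) ∧
      (∀ x y y' : ℂ, MvPolynomial.eval ![x, y] h ≠ 0 →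
          MvPolynomial.eval ![x, y'] h ≠ 0 → ψ₁ x y = ψ₁ x y') ∧
      (∀ x : ℂ, c * x + d ≠ 0 → c * (α * x) + d ≠ 0 →
          (a * (α * x) + b) / (c * (α * x) + d) = α * ((a * x + b) / (c * x + d))) := by
  classical
  obtain ⟨⟨p, q, hq, hp1⟩, ⟨r, s, hs, hp2⟩, f', g', hf'rat, hg'rat, hB, hBne, hinv⟩ := hbir
  obtain ⟨h₀, hh₀, hcom⟩ := hcomm
  have hTq : Stmt7Aux.Tm α q ≠ 0 := Stmt7Aux.Tm_ne_zero α hα hq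
  have hTs : Stmt7Aux.Tm α s ≠ 0 := Stmt7Aux.Tm_ne_zero α hα hs
  -- polynomial identity for ψ₁
  have hids : Stmt7Aux.Tm α p * q = MvPolynomial.C α * (p * Stmt7Aux.Tm α q) := by
    have hK : Stmt7Aux.Tm α p * q - MvPolynomial.C α * (p * Stmt7Aux.Tm α q) = 0 := by
      apply Stmt7Aux.poly_of_pointwise _ (h₀ * (q * Stmt7Aux.Tm α q))
        (mul_ne_zero hh₀ (mul_ne_zero hq hTq))
      intro x y hW
      simp only [map_mul, mul_ne_zero_iff] at hW
      obtain ⟨h1, h2, h3⟩ := hW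
      have hcc := (hcom x y h1).1
      rw [hp1 (α * x) (y + 1), hp1 x y, ← Stmt7Aux.eval_Tm α x y p,
        ← Stmt7Aux.eval_Tm α x y q] at hcc
      simp only [map_sub, map_mul, MvPolynomial.eval_C]
      field_simp at hcc
      linear_combination hcc
    linear_combination hK
  -- polynomial identity for ψ₂
  have hids2 : Stmt7Aux.Tm α r * s = (r + s) * Stmt7Aux.Tm α s := by
    have hK : Stmt7Aux.Tm α r * s - (r + s) * Stmt7Aux.Tm α s = 0 := by
      apply Stmt7Aux.poly_of_pointwise _ (h₀ * (s * Stmt7Aux.Tm α s))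
        (mul_ne_zero hh₀ (mul_ne_zero hs hTs))
      intro x y hW
      simp only [map_mul, mul_ne_zero_iff] at hW
      obtain ⟨h1, h2, h3⟩ := hW
      have hcc := (hcom x y h1).2
      rw [hp2 (α * x) (y + 1), hp2 x y, ← Stmt7Aux.eval_Tm α x y r,
        ← Stmt7Aux.eval_Tm α x y s] at hcc
      simp only [map_sub, map_mul, map_add]
      field_simp at hcc
      linear_combination hcc
    linear_combination hK
  -- transfer to ℂ[y][x]
  have hqb : Stmt7Aux.Phi q ≠ 0 := fun h0 => hq (Stmt7Aux.Phi_injective (by simpa using h0))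
  have hsb : Stmt7Aux.Phi s ≠ 0 := fun h0 => hs (Stmt7Aux.Phi_injective (by simpa using h0))
  have hPhi1 : Stmt7Aux.Uu α (Stmt7Aux.Phi p) * Stmt7Aux.Phi q =
      Polynomial.C (Polynomial.C α) * (Stmt7Aux.Phi p * Stmt7Aux.Uu α (Stmt7Aux.Phi q)) := by
    have h' := congrArg Stmt7Aux.Phi hids
    simpa only [map_mul, Stmt7Aux.Phi_Tm, Stmt7Aux.Phi_C] using h'
  have hPhi2 : Stmt7Aux.Uu α (Stmt7Aux.Phi r) * Stmt7Aux.Phi s =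
      (Stmt7Aux.Phi r + Stmt7Aux.Phi s) * Stmt7Aux.Uu α (Stmt7Aux.Phi s) := by
    have h' := congrArg Stmt7Aux.Phi hids2
    simpa only [map_mul, map_add, Stmt7Aux.Phi_Tm] using h'
  -- ψ₁ : apply the invariant lemma to p / (x q)
  obtain ⟨c, hc⟩ : ∃ c : ℂ, Stmt7Aux.Phi p =
      Polynomial.C (Polynomial.C c) * (Polynomial.X * Stmt7Aux.Phi q) := by
    apply Stmt7Aux.invariant_const α hα hroot _ _ (mul_ne_zero Polynomial.X_ne_zero hqb)
    have hUqX : Stmt7Aux.Uu α (Polynomial.X * Stmt7Aux.Phi q) =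
        Polynomial.C (Polynomial.C α) * Polynomial.X * Stmt7Aux.Uu α (Stmt7Aux.Phi q) := by
      rw [map_mul, Stmt7Aux.Uu_X]
    linear_combination Polynomial.X * hPhi1 - Stmt7Aux.Phi p * hUqX
  have hpc : p = MvPolynomial.C c * (MvPolynomial.X 0 * q) := by
    apply Stmt7Aux.Phi_injective
    rw [map_mul, map_mul, Stmt7Aux.Phi_C, Stmt7Aux.Phi_X0, hc]
  -- ψ₂ : apply the invariant lemma to (r - y s) / s
  obtain ⟨cc, hcc2⟩ : ∃ cc : ℂ, Stmt7Aux.Phi r - Polynomial.C Polynomial.X * Stmt7Aux.Phi s =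
      Polynomial.C (Polynomial.C cc) * Stmt7Aux.Phi s := by
    apply Stmt7Aux.invariant_const α hα hroot _ _ hsb
    have hUb : Stmt7Aux.Uu α (Stmt7Aux.Phi r - Polynomial.C Polynomial.X * Stmt7Aux.Phi s) =
        Stmt7Aux.Uu α (Stmt7Aux.Phi r) -
          (Polynomial.C Polynomial.X + 1) * Stmt7Aux.Uu α (Stmt7Aux.Phi s) := by
      have hCC : (Polynomial.C (Polynomial.X + Polynomial.C 1) :
          Polynomial (Polynomial ℂ)) = Polynomial.C Polynomial.X + 1 := by
        rw [map_add]; simp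
      rw [map_sub, map_mul, Stmt7Aux.Uu_C, Stmt7Aux.Sh_X, hCC]
    rw [hUb]
    linear_combination hPhi2
  have hrc : r = (MvPolynomial.C cc + MvPolynomial.X 1) * s := by
    apply Stmt7Aux.Phi_injective
    rw [map_mul, map_add, Stmt7Aux.Phi_C, Stmt7Aux.Phi_X1]
    linear_combination hcc2
  -- evaluation forms
  have Hp : ∀ x y : ℂ, MvPolynomial.eval ![x, y] p = c * (x * MvPolynomial.eval ![x, y] q) := by
    intro x y
    rw [hpc]
    simp
  have Hr : ∀ x y : ℂ, MvPolynomial.eval ![x, y] r = (cc + y) * MvPolynomial.eval ![x, y] s := by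
    intro x y
    rw [hrc]
    simp
  have hψ2 : ∀ x y : ℂ, MvPolynomial.eval ![x, y] s ≠ 0 → ψ₂ x y = y + cc := by
    intro x y hsne
    rw [hp2 x y, Hr x y, mul_div_assoc, div_self hsne, mul_one]
    ring
  -- c ≠ 0 via birationality
  have hc0 : c ≠ 0 := by
    intro hc0
    have hp0 : p = 0 := by rw [hpc, hc0]; simp
    have hψ10 : ∀ x y : ℂ, ψ₁ x y = 0 := by
      intro x y
      rw [hp1 x y, hp0]
      simp
    obtain ⟨x₁, x₂, y₀, hx12, hG1, hG2⟩ :=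
      Stmt7Aux.exists_two_points (hB * s) (mul_ne_zero hBne hs)
    simp only [map_mul, mul_ne_zero_iff] at hG1 hG2
    have e1 := (hinv x₁ y₀ hG1.1).1
    have e2 := (hinv x₂ y₀ hG2.1).1
    rw [hψ10, hψ2 x₁ y₀ hG1.2] at e1
    rw [hψ10, hψ2 x₂ y₀ hG2.2] at e2
    exact hx12 (e1.symm.trans e2)
  -- conclusion
  refine ⟨c, 0, 0, 1, cc, q * s, by simpa using hc0, mul_ne_zero hq hs, ?_, ?_, ?_⟩
  · intro x y hW
    simp only [map_mul, mul_ne_zero_iff] at hW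
    constructor
    · rw [hp1 x y, Hp x y, mul_div_assoc, mul_div_assoc, div_self hW.1, mul_one]
      simp
    · exact hψ2 x y hW.2
  · intro x y y' hW hW'
    simp only [map_mul, mul_ne_zero_iff] at hW hW'
    rw [hp1 x y, hp1 x y', Hp x y, Hp x y', mul_div_assoc, mul_div_assoc, div_self hW.1,
      mul_div_assoc, mul_div_assoc, div_self hW'.1]
  · intro x h1 h2
    simp only [zero_mul, zero_add, add_zero, div_one]
    ring
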